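/- Let B ⊆ Î be a 0-box over an interval J ⊆ I such that B ∩ π₀^{−1}(x) is a Borel subset of Î for every x ∈ J ∖ PC. Then for all a, b ∈ J ∖ PC, α_a(B) = α_b(B). -/

import Mathlib

open Set MeasureTheory ENNReal Topology

noncomputable section

namespace Tent

/-- The core interval `I = [0,1]`. -/
def I : Set ℝ := Set.Icc 0 1

/-- The core tent map of slope `s`, `f(x) = min(s·x + 2 − s, s·(1 − x))`. -/
def f (s : ℝ) (x : ℝ) : ℝ := min (s * x + 2 - s) (s * (1 - x))

/-- The critical point `c = 1 − 1/s`. -/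
def c (s : ℝ) : ℝ := 1 - 1 / s

/-- The post-critical set `PC = {c, f(c), f²(c), …}`. -/
def PC (s : ℝ) : Set ℝ := Set.range fun n => (f s)^[n] (c s)

/-- The inverse limit, as a set of sequences: `x_i ∈ I` and `f(x_{i+1}) = x_i`. -/
def IhatSet (s : ℝ) : Set (ℕ → ℝ) :=
  {x | (∀ i, x i ∈ I) ∧ ∀ i, f s (x (i + 1)) = x i}

/-- The inverse limit space `Î`. -/
abbrev Ihat (s : ℝ) : Type := ↥(IhatSet s)

/-- The metric on `Î`: `d(x,y) = Σ_i |x_i − y_i|/2^i`. -/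
def dHat (s : ℝ) (x y : Ihat s) : ℝ := ∑' i : ℕ, |x.1 i - y.1 i| / 2 ^ i

/-- The shift map on sequences: `x ↦ (f(x₀), x₀, x₁, …)`. -/
def fhatSeq (s : ℝ) (x : ℕ → ℝ) : ℕ → ℝ := fun n => Nat.casesOn n (f s (x 0)) fun k => x k

/-- The image under `f̂ⁿ` of a subset of `Î`. -/
def fhatImage (s : ℝ) (n : ℕ) (K : Set (Ihat s)) : Set (Ihat s) :=
  {y : Ihat s | ∃ x ∈ K, y.1 = (fhatSeq s)^[n] (Subtype.val x)}

/-- The inverse `f̂⁻ⁿ` of the shift homeomorphism: drop the first `n` coordinates. -/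
def fhatInv (s : ℝ) (n : ℕ) (x : Ihat s) : Ihat s :=
  ⟨fun i => x.1 (i + n), fun i => x.2.1 (i + n), fun i => by
    show f s (x.1 (i + 1 + n)) = x.1 (i + n)
    rw [show i + 1 + n = i + n + 1 from by omega]
    exact x.2.2 (i + n)⟩

/-- `γ` is an arc in `Î`: homeomorphic to a nontrivial interval of `ℝ`. -/
def IsArc (s : ℝ) (γ : Set (Ihat s)) : Prop :=
  ∃ J : Set ℝ, J.OrdConnected ∧ J.Nontrivial ∧ Nonempty (γ ≃ₜ J)

/-- `γ` is a closed arc in `Î`: homeomorphic to `[0,1]`. -/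
def IsClosedArc (s : ℝ) (γ : Set (Ihat s)) : Prop := Nonempty (γ ≃ₜ (Set.Icc (0:ℝ) 1))

/-- `γ` is an open arc in `Î`: homeomorphic to `(0,1)`. -/
def IsOpenArc (s : ℝ) (γ : Set (Ihat s)) : Prop := Nonempty (γ ≃ₜ (Set.Ioo (0:ℝ) 1))

/-- `x` is an endpoint of the closed arc `γ`. -/
def IsEndpoint (s : ℝ) (x : Ihat s) (γ : Set (Ihat s)) : Prop :=
  ∃ (e : γ ≃ₜ (Set.Icc (0:ℝ) 1)) (hx : x ∈ γ), (e ⟨x, hx⟩).1 = 0 ∨ (e ⟨x, hx⟩).1 = 1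

/-- `γ` is `m`-flat over the nontrivial interval `J ⊆ I`: the projection `π_m`
restricted to `γ` is a homeomorphism onto `J`. -/
def MFlatOver (s : ℝ) (m : ℕ) (γ : Set (Ihat s)) (J : Set ℝ) : Prop :=
  J ⊆ I ∧ J.OrdConnected ∧ J.Nontrivial ∧
    ∃ e : γ ≃ₜ J, ∀ x : γ, (e x).1 = x.1.1 m

/-- `γ` is an `m`-flat arc. -/
def IsMFlat (s : ℝ) (m : ℕ) (γ : Set (Ihat s)) : Prop := ∃ J : Set ℝ, MFlatOver s m γ J

/-- `γ` is a flat arc: `m`-flat for some `m ≥ 0`. -/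
def IsFlat (s : ℝ) (γ : Set (Ihat s)) : Prop := ∃ m : ℕ, IsMFlat s m γ

/-- `γ` is a flat closed arc. -/
def IsFlatClosedArc (s : ℝ) (γ : Set (Ihat s)) : Prop := IsClosedArc s γ ∧ IsFlat s γ

/-- `p 0, …, p k` occur in order along the closed arc `γ` (from one endpoint to the other). -/
def InOrderAlong (s : ℝ) (γ : Set (Ihat s)) (k : ℕ) (p : ℕ → Ihat s) : Prop :=
  ∃ (e : γ ≃ₜ (Set.Icc (0:ℝ) 1)) (t : ℕ → Set.Icc (0:ℝ) 1),
    (∀ i j, i ≤ j → j ≤ k → t i ≤ t j) ∧ ∀ i ≤ k, (e.symm (t i)).1 = p i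

/-- The arclength of a closed arc `γ` in the metric `d`: the supremum over finite
sequences of points occurring in order along `γ` of the sums of successive distances. -/
def arcLength (s : ℝ) (γ : Set (Ihat s)) : ℝ≥0∞ :=
  ⨆ (k : ℕ) (p : ℕ → Ihat s) (_ : InOrderAlong s γ k p),
    ENNReal.ofReal (∑ i ∈ Finset.range k, dHat s (p i) (p (i + 1)))

/-- A continuum: a compact connected subset of `Î` with more than one point. -/
def IsContinuum (s : ℝ) (K : Set (Ihat s)) : Prop :=
  IsCompact K ∧ IsConnected K ∧ K.Nontrivial

/-- `K` is `ε`-dense in `Î`. -/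
def EpsDense (s : ℝ) (ε : ℝ) (K : Set (Ihat s)) : Prop :=
  ∀ x : Ihat s, ∃ y ∈ K, dHat s x y ≤ ε

/-- `S` is metrically infinite: contains flat closed arcs of arbitrarily large length. -/
def MetricallyInfinite (s : ℝ) (S : Set (Ihat s)) : Prop :=
  ∀ N : ℝ, 0 < N → ∃ γ : Set (Ihat s), γ ⊆ S ∧ IsFlatClosedArc s γ ∧
    ENNReal.ofReal N < arcLength s γ

/-- An arc is bi-dense if, for some point `p` in it, both connected components of
`γ ∖ {p}` are dense in `Î`. -/
def BiDense (s : ℝ) (γ : Set (Ihat s)) : Prop :=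
  ∃ p ∈ γ, ∀ q ∈ γ \ {p}, Dense (connectedComponentIn (γ \ {p}) q)

/-- An arc is metrically bi-infinite if, for some point `p` in it, both connected
components of `γ ∖ {p}` are metrically infinite. -/
def MetricallyBiInfinite (s : ℝ) (γ : Set (Ihat s)) : Prop :=
  ∃ p ∈ γ, ∀ q ∈ γ \ {p}, MetricallyInfinite s (connectedComponentIn (γ \ {p}) q)

/-- `x` is globally leaf regular: its path component is a bi-dense, metrically
bi-infinite open arc. -/
def GloballyLeafRegular (s : ℝ) (x : Ihat s) : Prop :=
  IsOpenArc s (pathComponent x) ∧ BiDense s (pathComponent x) ∧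
    MetricallyBiInfinite s (pathComponent x)

/-- A `0`-box over `J`: a union of arcs, each `0`-flat over `J`. -/
def ZeroBoxOver (s : ℝ) (B : Set (Ihat s)) (J : Set ℝ) : Prop :=
  ∃ A : Set (Set (Ihat s)), (∀ γ ∈ A, MFlatOver s 0 γ J) ∧ B = ⋃₀ A

/-- An `m`-box over `J`: `f̂⁻ᵐ(B)` is a `0`-box over `J`. -/
def MBoxOver (s : ℝ) (m : ℕ) (B : Set (Ihat s)) (J : Set ℝ) : Prop :=
  ZeroBoxOver s (fhatInv s m '' B) J

/-- The maximal `m`-box over `J`: the union of all arcs `m`-flat over `J`. -/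
def maximalMBox (s : ℝ) (m : ℕ) (J : Set ℝ) : Set (Ihat s) :=
  ⋃₀ {γ : Set (Ihat s) | MFlatOver s m γ J}

/-- The point cylinder `[y₀, …, y_n]`. -/
def pointCyl (s : ℝ) (y : ℕ → ℝ) (n : ℕ) : Set (Ihat s) :=
  {z : Ihat s | ∀ i ≤ n, z.1 i = y i}

/-!
Each arc of the box is the image of a continuous section `σ` of `π₀` over `J`, and the `n`-th
coordinate of `σ` is a continuous right inverse of `fⁿ` over `J`. Such a right inverse is
determined by its value over one point outside `PC`, where `fⁿ` is locally injective; with the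
intermediate value theorem, the `n`-th coordinates of two different sections therefore sweep
disjoint intervals as the base point moves from `a` to `b`. So the level-`n` cylinders through
the box over `a` and over `b` correspond one to one, and their `α`-masses `φ(v)/sⁿ` differ in
total by at most `Var φ / sⁿ`. Approximating the fibre of the box over `b` from inside by a
closed set and letting `n → ∞` gives `α_b(B) ≤ α_a(B)`; symmetry gives equality.
-/
open Filter

section RightInverses

variable {J : Set ℝ} {g g' h : ℝ → ℝ}

lemma image_mem_nhds_of_injOn (hg : ContinuousOn g J) (hinj : InjOn g J) {r : ℝ}
    (hr : r ∈ interior J) : g '' J ∈ 𝓝 (g r) := by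
  obtain ⟨ε, hε, hball⟩ := Metric.mem_nhds_iff.1 (mem_interior_iff_mem_nhds.1 hr)
  have hIcc : Icc (r - ε / 2) (r + ε / 2) ⊆ J := fun x hx =>
    hball (by rw [Metric.mem_ball, Real.dist_eq, abs_lt]; constructor <;> linarith [hx.1, hx.2])
  have h₁ : r - ε / 2 < r := by linarith
  have h₂ : r < r + ε / 2 := by linarith
  have hmem : r ∈ Icc (r - ε / 2) (r + ε / 2) := ⟨h₁.le, h₂.le⟩
  have hc := hg.mono hIcc
  refine mem_of_superset ?_ (image_mono hIcc)
  rcases hc.strictMonoOn_of_injOn_Icc' (by linarith) (hinj.mono hIcc) with hmono | hanti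
  · rw [hc.image_Icc_of_monotoneOn (by linarith) hmono.monotoneOn]
    exact Icc_mem_nhds (hmono ⟨le_rfl, by linarith⟩ hmem h₁) (hmono hmem ⟨by linarith, le_rfl⟩ h₂)
  · rw [hc.image_Icc_of_antitoneOn (by linarith) hanti.antitoneOn]
    exact Icc_mem_nhds (hanti hmem ⟨by linarith, le_rfl⟩ h₂) (hanti ⟨le_rfl, by linarith⟩ hmem h₁)

lemma eventually_eq_of_leftInvOn {r : ℝ} (hg : ContinuousWithinAt g J r)
    (hg' : ContinuousWithinAt g' J r) (hgh : LeftInvOn h g J) (hg'h : LeftInvOn h g' J)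
    (hr : g r = g' r) {U : Set ℝ} (hU : U ∈ 𝓝 (g r)) (hinj : InjOn h U) :
    ∀ᶠ t in 𝓝[J] r, g t = g' t := by
  filter_upwards [self_mem_nhdsWithin, hg hU, hg' (hr ▸ hU)] with t ht hgt hg't
  exact hinj hgt hg't ((hgh ht).trans (hg'h ht).symm)

lemma subset_closure_interior_of_ordConnected (hJ : J.OrdConnected) (hJnt : J.Nontrivial) :
    J ⊆ closure (interior J) := by
  obtain ⟨x, hx, y, hy, hlt⟩ := hJnt.exists_lt
  have hint : (interior J).Nonempty :=
    (nonempty_Ioo.2 hlt).mono (interior_maximal (hJ.out hx hy |>.trans' Ioo_subset_Icc_self)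
      isOpen_Ioo)
  rw [(hJ.convex (𝕜 := ℝ)).closure_interior_eq_closure_of_nonempty_interior hint]
  exact subset_closure

/-- At an interior point `r`, `h` is injective on the neighbourhood `g '' J` of `g r`, so the
agreement set is open in the connected interior of `J`; it is also closed there. -/
lemma eqOn_of_leftInvOn (hJ : J.OrdConnected) (hJnt : J.Nontrivial) (hg : ContinuousOn g J)
    (hg' : ContinuousOn g' J) (hgh : LeftInvOn h g J) (hg'h : LeftInvOn h g' J) {t : ℝ}
    (ht : t ∈ J) (heq : g t = g' t) (hgood : t ∈ interior J ∨ ∃ U ∈ 𝓝 (g t), InjOn h U) :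
    EqOn g g' J := by
  have hloc : ∀ r ∈ interior J, g r = g' r → ∀ᶠ t in 𝓝 r, g t = g' t := fun r hr hr' => by
    have hJr : J ∈ 𝓝 r := mem_interior_iff_mem_nhds.1 hr
    have hinj : InjOn h (g '' J) := by
      rintro _ ⟨x, hx, rfl⟩ _ ⟨y, hy, rfl⟩ hxy
      rw [hgh hx, hgh hy] at hxy
      rw [hxy]
    simpa [nhdsWithin_eq_nhds.2 hJr] using eventually_eq_of_leftInvOn (hg r (interior_subset hr))
      (hg' r (interior_subset hr)) hgh hg'h hr' (image_mem_nhds_of_injOn hg hgh.injOn hr) hinj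
  obtain ⟨r₀, hr₀, hr₀eq⟩ : ∃ r ∈ interior J, g r = g' r := by
    rcases hgood with hint | ⟨U, hU, hinj⟩
    · exact ⟨t, hint, heq⟩
    · have hne : (𝓝[interior J] t).NeBot :=
        mem_closure_iff_nhdsWithin_neBot.1 (subset_closure_interior_of_ordConnected hJ hJnt ht)
      exact ((eventually_eq_of_leftInvOn (hg t ht) (hg' t ht) hgh hg'h heq hU hinj).filter_mono
        (nhdsWithin_mono _ interior_subset)).and self_mem_nhdsWithin |>.exists.imp
          fun r hr => ⟨hr.2, hr.1⟩
  have : PreconnectedSpace (interior J) :=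
    Subtype.preconnectedSpace (hJ.convex (𝕜 := ℝ)).interior.isPreconnected
  have hclopen : IsClopen {r : interior J | g r = g' r} := by
    have hcont : ∀ {k : ℝ → ℝ}, ContinuousOn k J → Continuous fun r : interior J => k r :=
      fun hk => (hk.mono interior_subset).domRestrict
    refine ⟨isClosed_eq (hcont hg) (hcont hg'), isOpen_iff_mem_nhds.2 fun r hr => ?_⟩
    exact continuous_subtype_val.continuousAt.preimage_mem_nhds (hloc r r.2 hr)
  have hEq : EqOn g g' (interior J) := fun r hr =>
    (hclopen.eq_univ ⟨⟨r₀, hr₀⟩, hr₀eq⟩).superset (mem_univ (⟨r, hr⟩ : interior J))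
  exact hEq.of_subset_closure hg hg' interior_subset
    (subset_closure_interior_of_ordConnected hJ hJnt)

lemma disjoint_uIcc_of_leftInvOn (hJ : J.OrdConnected) (hJnt : J.Nontrivial)
    (hg : ContinuousOn g J) (hg' : ContinuousOn g' J) (hgh : LeftInvOn h g J)
    (hg'h : LeftInvOn h g' J) {a b : ℝ} (ha : a ∈ J) (hb : b ∈ J)
    (ha' : ∀ u, h u = a → ∃ U ∈ 𝓝 u, InjOn h U) (hb' : ∀ u, h u = b → ∃ U ∈ 𝓝 u, InjOn h U)
    (hne : g a ≠ g' a) : Disjoint (uIcc (g a) (g b)) (uIcc (g' a) (g' b)) := by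
  refine disjoint_left.2 fun r hr hr' => hne ?_
  have hab : uIcc a b ⊆ J := hJ.uIcc_subset ha hb
  obtain ⟨t, ht, rfl⟩ := intermediate_value_uIcc (hg.mono hab) hr
  obtain ⟨t', ht', hgt'⟩ := intermediate_value_uIcc (hg'.mono hab) hr'
  have htt : t' = t := by rw [← hg'h (hab ht'), hgt', hgh (hab ht)]
  rw [htt] at hgt'
  have hgood : t ∈ interior J ∨ ∃ U ∈ 𝓝 (g t), InjOn h U := by
    by_cases hta : t = a
    · exact Or.inr (ha' _ (hta ▸ hgh (hab ht)))
    by_cases htb : t = b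
    · exact Or.inr (hb' _ (htb ▸ hgh (hab ht)))
    have hIoo : t ∈ Ioo (min a b) (max a b) := by
      rcases le_total a b with hle | hle
      · rw [uIcc_of_le hle] at ht
        rw [min_eq_left hle, max_eq_right hle]
        exact ⟨ht.1.lt_of_ne' hta, ht.2.lt_of_ne htb⟩
      · rw [uIcc_of_ge hle] at ht
        rw [min_eq_right hle, max_eq_left hle]
        exact ⟨ht.1.lt_of_ne' htb, ht.2.lt_of_ne hta⟩
    exact Or.inl (interior_mono hab (interior_maximal Ioo_subset_Icc_self isOpen_Ioo hIoo))
  exact eqOn_of_leftInvOn hJ hJnt hg hg' hgh hg'h (hab ht) hgt'.symm hgood ha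

end RightInverses

lemma lt_of_disjoint_uIcc {v w v' w' q q' : ℝ} (hd : Disjoint (uIcc v w) (uIcc v' w'))
    (hlt : v < v') (hq : q ∈ uIcc v w) (hq' : q' ∈ uIcc v' w') : q < q' := by
  by_contra! hle
  rcases le_or_gt v' q with h | h
  · exact disjoint_left.1 hd (ordConnected_uIcc.uIcc_subset left_mem_uIcc hq
      (mem_uIcc_of_le hlt.le h)) left_mem_uIcc
  · exact disjoint_left.1 hd hq (ordConnected_uIcc.uIcc_subset hq' left_mem_uIcc
      (mem_uIcc_of_le hle h.le))

lemma sum_edist_le_eVariationOn {ι : Type*} (φ : ℝ → ℝ) {K : Set ℝ} (hK : K.OrdConnected)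
    (R : Finset ι) (u w : ι → ℝ) (hmem : ∀ i ∈ R, u i ∈ K ∧ w i ∈ K)
    (hdisj : (R : Set ι).PairwiseDisjoint fun i => uIcc (u i) (w i)) :
    ∑ i ∈ R, edist (φ (w i)) (φ (u i)) ≤ eVariationOn φ K := by
  classical
  refine le_trans ?_ (eVariationOn.mono φ (iUnion₂_subset fun i hi =>
    hK.uIcc_subset (hmem i hi).1 (hmem i hi).2))
  induction R using Finset.induction_on_min_value u with
  | empty => simp
  | insert i R hiR hmin ih =>
    rw [Finset.coe_insert] at hdisj
    have hdisj_i : ∀ j ∈ R, Disjoint (uIcc (u i) (w i)) (uIcc (u j) (w j)) := fun j hj =>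
      hdisj (mem_insert i _) (mem_insert_of_mem _ hj) (ne_of_mem_of_not_mem hj hiR).symm
    have hlt : ∀ j ∈ R, u i < u j := fun j hj => (hmin j hj).lt_of_ne fun hij =>
      disjoint_left.1 (hdisj_i j hj) left_mem_uIcc (hij ▸ left_mem_uIcc)
    have hle : ∀ x ∈ uIcc (u i) (w i), ∀ y ∈ ⋃ j ∈ R, uIcc (u j) (w j), x ≤ y := by
      intro x hx y hy
      obtain ⟨j, hj, hyj⟩ := mem_iUnion₂.1 hy
      exact (lt_of_disjoint_uIcc (hdisj_i j hj) (hlt j hj) hx hyj).le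
    rw [Finset.sum_insert hiR, Finset.set_biUnion_insert]
    calc edist (φ (w i)) (φ (u i)) + ∑ j ∈ R, edist (φ (w j)) (φ (u j))
        ≤ eVariationOn φ (uIcc (u i) (w i)) + eVariationOn φ (⋃ j ∈ R, uIcc (u j) (w j)) :=
          add_le_add (eVariationOn.edist_le φ right_mem_uIcc left_mem_uIcc)
            (ih (fun j hj => hmem j (Finset.mem_insert_of_mem hj))
              (hdisj.subset (subset_insert _ _)))
      _ ≤ _ := eVariationOn.add_le_union φ hle

lemma ofReal_div_pow_le_add {s : ℝ} (hs : 0 < s) (p q : ℝ) (n : ℕ) :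
    ENNReal.ofReal (p / s ^ n) ≤
      ENNReal.ofReal (q / s ^ n) + edist p q * ENNReal.ofReal s⁻¹ ^ n := by
  calc ENNReal.ofReal (p / s ^ n) ≤ ENNReal.ofReal (q / s ^ n + |p - q| / s ^ n) :=
        ENNReal.ofReal_le_ofReal (by rw [← add_div]; gcongr; linarith [le_abs_self (p - q)])
    _ ≤ ENNReal.ofReal (q / s ^ n) + ENNReal.ofReal (|p - q| / s ^ n) := ENNReal.ofReal_add_le
    _ = _ := by
        rw [edist_dist, Real.dist_eq, ← ENNReal.ofReal_pow (inv_nonneg.2 hs.le),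
          ← ENNReal.ofReal_mul (abs_nonneg _), inv_pow, ← div_eq_mul_inv]

section TentMap

variable {s : ℝ}

lemma continuous_f : Continuous (f s) := by
  unfold f
  fun_prop

lemma mul_c (hs : s ≠ 0) : s * c s = s - 1 := by
  unfold c
  field_simp

lemma f_of_le_c (hs : 0 < s) {x : ℝ} (hx : x ≤ c s) : f s x = s * x + 2 - s :=
  min_eq_left (by nlinarith [mul_c hs.ne', mul_le_mul_of_nonneg_left hx hs.le])

lemma f_of_c_le (hs : 0 < s) {x : ℝ} (hx : c s ≤ x) : f s x = s * (1 - x) :=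
  min_eq_right (by nlinarith [mul_c hs.ne', mul_le_mul_of_nonneg_left hx hs.le])

lemma injOn_f_Iio (hs : 0 < s) : InjOn (f s) (Iio (c s)) := fun x hx y hy hxy => by
  rw [f_of_le_c hs (le_of_lt hx), f_of_le_c hs (le_of_lt hy)] at hxy
  exact mul_left_cancel₀ hs.ne' (by linarith)

lemma injOn_f_Ioi (hs : 0 < s) : InjOn (f s) (Ioi (c s)) := fun x hx y hy hxy => by
  rw [f_of_c_le hs (le_of_lt hx), f_of_c_le hs (le_of_lt hy)] at hxy
  linarith [mul_left_cancel₀ hs.ne' hxy]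

lemma finite_preimage_f (hs : s ≠ 0) (z : ℝ) : (f s ⁻¹' {z}).Finite := by
  refine (Set.toFinite {(z - 2 + s) / s, 1 - z / s}).subset fun y hy => ?_
  simp only [mem_preimage, mem_singleton_iff, f] at hy
  rcases min_choice (s * y + 2 - s) (s * (1 - y)) with hm | hm <;> rw [hm] at hy
  · left; field_simp; linarith
  · right; rw [mem_singleton_iff, ← hy]; field_simp; ring

lemma finite_preimage_iterate (hs : s ≠ 0) (x : ℝ) (n : ℕ) : ((f s)^[n] ⁻¹' {x}).Finite := by
  induction n with
  | zero => simp
  | succ n ih =>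
    rw [Function.iterate_succ, preimage_comp]
    exact ih.preimage' fun z _ => finite_preimage_f hs z

lemma exists_mem_nhds_injOn_iterate (hs : 0 < s) {n : ℕ} {u : ℝ}
    (hu : ∀ j < n, (f s)^[j] u ≠ c s) : ∃ U ∈ 𝓝 u, InjOn (f s)^[n] U := by
  induction n generalizing u with
  | zero => exact ⟨univ, univ_mem, fun _ _ _ _ h => h⟩
  | succ n ih =>
    obtain ⟨V, hV, hVinj⟩ := ih fun j hj => hu (j + 1) (by omega)
    have hside : ∃ W ∈ 𝓝 u, InjOn (f s) W := by
      rcases (hu 0 n.succ_pos).lt_or_gt with h | h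
      · exact ⟨_, Iio_mem_nhds h, injOn_f_Iio hs⟩
      · exact ⟨_, Ioi_mem_nhds h, injOn_f_Ioi hs⟩
    obtain ⟨W, hW, hWinj⟩ := hside
    refine ⟨W ∩ f s ⁻¹' V, inter_mem hW (continuous_f.continuousAt.preimage_mem_nhds hV), ?_⟩
    rw [Function.iterate_succ]
    exact hVinj.comp (hWinj.mono inter_subset_left) fun x hx => hx.2

lemma exists_mem_nhds_injOn_iterate_of_notMem_PC (hs : 0 < s) {n : ℕ} {u : ℝ}
    (hu : (f s)^[n] u ∉ PC s) : ∃ U ∈ 𝓝 u, InjOn (f s)^[n] U := by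
  refine exists_mem_nhds_injOn_iterate hs fun j hj hc => hu ⟨n - j, ?_⟩
  show (f s)^[n - j] (c s) = _
  rw [← hc, ← Function.iterate_add_apply, Nat.sub_add_cancel hj.le]

end TentMap

section InverseLimit

variable {s : ℝ}

lemma continuous_coord (n : ℕ) : Continuous fun z : Ihat s => z.1 n :=
  (continuous_apply n).comp continuous_subtype_val

lemma iterate_coord_add (z : Ihat s) (m k : ℕ) : (f s)^[k] (z.1 (m + k)) = z.1 m := by
  induction k with
  | zero => rfl
  | succ k ih => rw [Function.iterate_succ_apply, ← add_assoc, z.2.2, ih]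

lemma iterate_coord (z : Ihat s) (n : ℕ) : (f s)^[n] (z.1 n) = z.1 0 := by
  simpa using iterate_coord_add z 0 n

lemma coord_eq_of_coord_eq {z w : Ihat s} {m n : ℕ} (h : z.1 n = w.1 n) (hmn : m ≤ n) :
    z.1 m = w.1 m := by
  obtain ⟨k, rfl⟩ := Nat.exists_eq_add_of_le hmn
  rw [← iterate_coord_add z, ← iterate_coord_add w, h]

lemma pointCyl_coord (w : Ihat s) (n : ℕ) : pointCyl s w.1 n = {z | z.1 n = w.1 n} :=
  Set.ext fun _ => ⟨fun h => h n le_rfl, fun h _ hi => coord_eq_of_coord_eq h hi⟩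

lemma exists_tendsto_of_coord_eq (y : ℕ → Ihat s) (hy : ∀ m n, m ≤ n → (y n).1 m = (y m).1 m) :
    ∃ w : Ihat s, (∀ m, w.1 m = (y m).1 m) ∧ Tendsto y atTop (𝓝 w) := by
  refine ⟨⟨fun m => (y m).1 m, fun m => (y m).2.1 m, fun m => ?_⟩, fun m => rfl, ?_⟩
  · show f s ((y (m + 1)).1 (m + 1)) = (y m).1 m
    rw [← hy m (m + 1) m.le_succ]
    exact (y (m + 1)).2.2 m
  · rw [tendsto_subtype_rng, tendsto_pi_nhds]
    exact fun m => tendsto_atTop_of_eventually_const fun n hn => hy m n hn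

end InverseLimit

lemma measure_inter_fiber {s x : ℝ} {μ : Measure (Ihat s)} (hsupp : μ {z | z.1 0 ≠ x} = 0)
    (A : Set (Ihat s)) : μ (A ∩ {z | z.1 0 = x}) = μ A :=
  measure_inter_conull (by simpa [compl_ofPred] using hsupp)

def HasCylinderMasses (s : ℝ) (φ : ℝ → ℝ) (α : ℝ → Measure (Ihat s)) : Prop :=
  ∀ x ∈ I \ PC s, ∀ (y : ℕ → ℝ) (n : ℕ), y 0 = x →
    (∀ i ≤ n, y i ∈ I) → (∀ i < n, f s (y (i + 1)) = y i) →
    α x (pointCyl s y n) = ENNReal.ofReal (φ (y n) / s ^ n)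

namespace HasCylinderMasses

variable {s : ℝ} {φ : ℝ → ℝ} {α : ℝ → Measure (Ihat s)}

lemma measure_coord_eq (hα : HasCylinderMasses s φ α) (w : Ihat s) (hw : w.1 0 ∈ I \ PC s)
    (n : ℕ) : α (w.1 0) {z | z.1 n = w.1 n} = ENNReal.ofReal (φ (w.1 n) / s ^ n) := by
  rw [← pointCyl_coord]
  exact hα _ hw w.1 n rfl (fun i _ => w.2.1 i) fun i _ => w.2.2 i

lemma measure_fiber (hα : HasCylinderMasses s φ α) {x : ℝ} (hx : x ∈ I \ PC s) :
    α x {z | z.1 0 = x} = ENNReal.ofReal (φ x) := by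
  simpa [pointCyl] using hα x hx (fun _ => x) 0 rfl (fun _ _ => hx.1) fun _ h => absurd h (by omega)

lemma isFiniteMeasure (hα : HasCylinderMasses s φ α) {x : ℝ} (hx : x ∈ I \ PC s)
    (hsupp : α x {z | z.1 0 ≠ x} = 0) : IsFiniteMeasure (α x) := by
  have hfiber := measure_inter_fiber hsupp univ
  rw [univ_inter, hα.measure_fiber hx] at hfiber
  exact ⟨hfiber ▸ ofReal_lt_top⟩

lemma measure_iUnion_coord_eq (hα : HasCylinderMasses s φ α) {x : ℝ} (hx : x ∈ I \ PC s)
    {ι : Type*} (R : Finset ι) (w : ι → Ihat s) (hw : ∀ i ∈ R, (w i).1 0 = x) {n : ℕ}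
    (hinj : InjOn (fun i => (w i).1 n) R) :
    α x {z | ∃ i ∈ R, z.1 n = (w i).1 n} = ∑ i ∈ R, ENNReal.ofReal (φ ((w i).1 n) / s ^ n) := by
  have hset : {z : Ihat s | ∃ i ∈ R, z.1 n = (w i).1 n} = ⋃ i ∈ R, {z | z.1 n = (w i).1 n} := by
    ext; simp
  rw [hset, measure_biUnion_finset]
  · refine Finset.sum_congr rfl fun i hi => ?_
    rw [← hw i hi, hα.measure_coord_eq (w i) (hw i hi ▸ hx)]
  · exact fun i hi j hj hij => disjoint_left.2 fun z hzi hzj =>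
      hij (hinj hi hj ((show z.1 n = _ from hzi).symm.trans hzj))
  · exact fun i _ => (isClosed_eq (continuous_coord n) continuous_const).measurableSet

end HasCylinderMasses

def IsSectionOver (s : ℝ) (J : Set ℝ) (σ : ℝ → Ihat s) : Prop :=
  ContinuousOn σ J ∧ ∀ t ∈ J, (σ t).1 0 = t

lemma MFlatOver.exists_section {s : ℝ} {γ : Set (Ihat s)} {J : Set ℝ} (h : MFlatOver s 0 γ J) :
    ∃ σ : ℝ → Ihat s, IsSectionOver s J σ ∧ γ = σ '' J := by
  classical
  obtain ⟨-, -, ⟨t₀, ht₀, -⟩, e, he⟩ := h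
  have hπ : ∀ t : J, (e.symm t : Ihat s).1 0 = t := fun t => by
    rw [← he, Homeomorph.apply_symm_apply]
  let σ : ℝ → Ihat s := fun t => if ht : t ∈ J then e.symm ⟨t, ht⟩ else e.symm ⟨t₀, ht₀⟩
  have hσ : ∀ t : J, σ t = e.symm t := fun t => dif_pos t.2
  refine ⟨σ, ⟨?_, fun t ht => by rw [hσ ⟨t, ht⟩, hπ]⟩, ?_⟩
  · rw [continuousOn_iff_continuous_domRestrict]
    exact (continuous_subtype_val.comp e.symm.continuous).congr fun t => (hσ t).symm
  · ext z
    refine ⟨fun hz => ⟨e ⟨z, hz⟩, (e ⟨z, hz⟩).2, ?_⟩, ?_⟩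
    · rw [hσ (e ⟨z, hz⟩), e.symm_apply_apply]
    · rintro ⟨t, ht, rfl⟩
      exact hσ ⟨t, ht⟩ ▸ (e.symm ⟨t, ht⟩).2

namespace IsSectionOver

variable {s : ℝ} {J : Set ℝ} {σ σ' : ℝ → Ihat s}

lemma continuousOn_coord (hσ : IsSectionOver s J σ) (n : ℕ) :
    ContinuousOn (fun t => (σ t).1 n) J :=
  (continuous_coord n).comp_continuousOn hσ.1

lemma leftInvOn_coord (hσ : IsSectionOver s J σ) (n : ℕ) :
    LeftInvOn (f s)^[n] (fun t => (σ t).1 n) J := fun t ht =>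
  (iterate_coord (σ t) n).trans (hσ.2 t ht)

lemma eq_of_mem_image (hσ : IsSectionOver s J σ) {z : Ihat s} (hz : z ∈ σ '' J) :
    σ (z.1 0) = z := by
  obtain ⟨t, ht, rfl⟩ := hz
  rw [hσ.2 t ht]

lemma coord_eqOn (hs : 0 < s) (hJ : J.OrdConnected) (hJnt : J.Nontrivial)
    (hσ : IsSectionOver s J σ) (hσ' : IsSectionOver s J σ') {n : ℕ} {t : ℝ} (ht : t ∈ J \ PC s)
    (h : (σ t).1 n = (σ' t).1 n) : EqOn (fun t => (σ t).1 n) (fun t => (σ' t).1 n) J :=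
  eqOn_of_leftInvOn hJ hJnt (hσ.continuousOn_coord n) (hσ'.continuousOn_coord n)
    (hσ.leftInvOn_coord n) (hσ'.leftInvOn_coord n) ht.1 h
    (Or.inr (exists_mem_nhds_injOn_iterate_of_notMem_PC hs
      (by rw [hσ.leftInvOn_coord n ht.1]; exact ht.2)))

lemma disjoint_uIcc_coord (hs : 0 < s) (hJ : J.OrdConnected) (hJnt : J.Nontrivial)
    (hσ : IsSectionOver s J σ) (hσ' : IsSectionOver s J σ') {n : ℕ} {a b : ℝ}
    (ha : a ∈ J \ PC s) (hb : b ∈ J \ PC s) (h : (σ a).1 n ≠ (σ' a).1 n) :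
    Disjoint (uIcc ((σ a).1 n) ((σ b).1 n)) (uIcc ((σ' a).1 n) ((σ' b).1 n)) :=
  disjoint_uIcc_of_leftInvOn hJ hJnt (hσ.continuousOn_coord n) (hσ'.continuousOn_coord n)
    (hσ.leftInvOn_coord n) (hσ'.leftInvOn_coord n) ha.1 hb.1
    (fun _ hu => exists_mem_nhds_injOn_iterate_of_notMem_PC hs (hu ▸ ha.2))
    (fun _ hu => exists_mem_nhds_injOn_iterate_of_notMem_PC hs (hu ▸ hb.2)) h

end IsSectionOver

def cylUnion {s : ℝ} {ι : Type*} (σ : ι → ℝ → Ihat s) (S : Set ι) (n : ℕ) (t : ℝ) :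
    Set (Ihat s) :=
  {z | ∃ i ∈ S, z.1 n = (σ i t).1 n}

section Holonomy

variable {s : ℝ} {φ : ℝ → ℝ} {α : ℝ → Measure (Ihat s)} {J : Set ℝ} {ι : Type*}
  {σ : ι → ℝ → Ihat s} {a b : ℝ}

lemma antitone_cylUnion (S : Set ι) (t : ℝ) : Antitone fun n => cylUnion σ S n t :=
  antitone_nat_of_succ_le fun n _ ⟨i, hi, hz⟩ => ⟨i, hi, coord_eq_of_coord_eq hz n.le_succ⟩

lemma cylUnion_subset_fiber (hσ : ∀ i, IsSectionOver s J (σ i)) (S : Set ι) (n : ℕ) {t : ℝ}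
    (ht : t ∈ J) : cylUnion σ S n t ⊆ {z | z.1 0 = t} := fun _ ⟨i, _, hz⟩ =>
  (coord_eq_of_coord_eq hz n.zero_le).trans ((hσ i).2 t ht)

lemma finite_image_coord (hs : s ≠ 0) (hσ : ∀ i, IsSectionOver s J (σ i)) (S : Set ι)
    (n : ℕ) {t : ℝ} (ht : t ∈ J) : ((fun i => (σ i t).1 n) '' S).Finite :=
  (finite_preimage_iterate hs t n).subset fun _ ⟨i, _, hi⟩ => hi ▸ (hσ i).leftInvOn_coord n ht

lemma measurableSet_cylUnion (hs : s ≠ 0) (hσ : ∀ i, IsSectionOver s J (σ i)) (S : Set ι)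
    (n : ℕ) {t : ℝ} (ht : t ∈ J) : MeasurableSet (cylUnion σ S n t) := by
  have hpre : cylUnion σ S n t = (fun z : Ihat s => z.1 n) ⁻¹' ((fun i => (σ i t).1 n) '' S) := by
    ext z
    simp [cylUnion, eq_comm]
  rw [hpre]
  exact ((finite_image_coord hs hσ S n ht).isClosed.preimage (continuous_coord n)).measurableSet

lemma cylUnion_eq_of_forall_exists {S R : Set ι} (hRS : R ⊆ S) {n : ℕ} {t : ℝ}
    (h : ∀ i ∈ S, ∃ j ∈ R, (σ j t).1 n = (σ i t).1 n) : cylUnion σ S n t = cylUnion σ R n t := by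
  refine Subset.antisymm (fun z ⟨i, hi, hz⟩ => ?_) fun z ⟨i, hi, hz⟩ => ⟨i, hRS hi, hz⟩
  obtain ⟨j, hj, hji⟩ := h i hi
  exact ⟨j, hj, hz.trans hji.symm⟩

/-- Sections through a cylinder over a point outside `PC` agree, so representatives of the
cylinders over `a` also represent those over `b`. -/
lemma exists_finset_cylUnion_eq (hs : 0 < s) (hJ : J.OrdConnected) (hJnt : J.Nontrivial)
    (hσ : ∀ i, IsSectionOver s J (σ i)) (ha : a ∈ J \ PC s) (hb : b ∈ J \ PC s) (S : Set ι)
    (n : ℕ) : ∃ R : Finset ι, InjOn (fun i => (σ i a).1 n) R ∧ InjOn (fun i => (σ i b).1 n) R ∧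
      cylUnion σ S n a = cylUnion σ R n a ∧ cylUnion σ S n b = cylUnion σ R n b := by
  classical
  obtain ⟨R, hRS, hRinj, hRimg⟩ := Finset.exists_subset_injOn_image_eq_of_surjOn
    (f := fun i => (σ i a).1 n) S (finite_image_coord hs.ne' hσ S n ha.1).toFinset
    (by simp [SurjOn])
  have hrep : ∀ i ∈ S, ∃ j ∈ R, (σ j a).1 n = (σ i a).1 n := fun i hi => by
    have : (σ i a).1 n ∈ R.image fun i => (σ i a).1 n := by
      rw [hRimg, Set.Finite.mem_toFinset]
      exact mem_image_of_mem _ hi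
    simpa using this
  refine ⟨R, hRinj, fun i hi j hj h => hRinj hi hj
    (IsSectionOver.coord_eqOn hs hJ hJnt (hσ i) (hσ j) hb h ha.1),
    cylUnion_eq_of_forall_exists hRS hrep, cylUnion_eq_of_forall_exists hRS fun i hi => ?_⟩
  obtain ⟨j, hj, hji⟩ := hrep i hi
  exact ⟨j, hj, IsSectionOver.coord_eqOn hs hJ hJnt (hσ j) (hσ i) ha hji hb.1⟩

/-- The matched coordinates over `a` and `b` sweep disjoint intervals, so the masses `φ(v)/sⁿ`
of the matched cylinders change in total by at most `Var φ / sⁿ`. -/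
lemma measure_cylUnion_le (hs : 0 < s) (hα : HasCylinderMasses s φ α) (hJI : J ⊆ I)
    (hJ : J.OrdConnected) (hJnt : J.Nontrivial) (hσ : ∀ i, IsSectionOver s J (σ i))
    (ha : a ∈ J \ PC s) (hb : b ∈ J \ PC s) (S : Set ι) (n : ℕ) :
    α b (cylUnion σ S n b) ≤
      α a (cylUnion σ S n a) + eVariationOn φ I * ENNReal.ofReal s⁻¹ ^ n := by
  obtain ⟨R, hinj_a, hinj_b, hSa, hSb⟩ := exists_finset_cylUnion_eq hs hJ hJnt hσ ha hb S n
  have hmass : ∀ {t}, t ∈ J \ PC s → InjOn (fun i => (σ i t).1 n) R →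
      α t (cylUnion σ R n t) = ∑ i ∈ R, ENNReal.ofReal (φ ((σ i t).1 n) / s ^ n) :=
    fun {t} ht hinj => hα.measure_iUnion_coord_eq ⟨hJI ht.1, ht.2⟩ R (fun i => σ i t)
      (fun i _ => (hσ i).2 _ ht.1) hinj
  have hdisj : (R : Set ι).PairwiseDisjoint fun i => uIcc ((σ i a).1 n) ((σ i b).1 n) :=
    fun i hi j hj hij => IsSectionOver.disjoint_uIcc_coord hs hJ hJnt (hσ i) (hσ j) ha hb
      fun h => hij (hinj_a hi hj h)
  rw [hSa, hSb, hmass ha hinj_a, hmass hb hinj_b]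
  calc ∑ i ∈ R, ENNReal.ofReal (φ ((σ i b).1 n) / s ^ n)
      ≤ ∑ i ∈ R, (ENNReal.ofReal (φ ((σ i a).1 n) / s ^ n) +
          edist (φ ((σ i b).1 n)) (φ ((σ i a).1 n)) * ENNReal.ofReal s⁻¹ ^ n) :=
        Finset.sum_le_sum fun i _ => ofReal_div_pow_le_add hs _ _ n
    _ = ∑ i ∈ R, ENNReal.ofReal (φ ((σ i a).1 n) / s ^ n) +
          (∑ i ∈ R, edist (φ ((σ i b).1 n)) (φ ((σ i a).1 n))) * ENNReal.ofReal s⁻¹ ^ n := by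
        rw [Finset.sum_add_distrib, Finset.sum_mul]
    _ ≤ _ := by
        gcongr
        exact sum_edist_le_eVariationOn φ ordConnected_Icc R _ _
          (fun i _ => ⟨(σ i a).2.1 n, (σ i b).2.1 n⟩) hdisj

/-- The sections through the cylinders containing `z` converge over `b` to a point of the
closed set `C`, and the section through that limit passes through `z`. -/
lemma iInter_cylUnion_subset (hs : 0 < s) (hJ : J.OrdConnected) (hJnt : J.Nontrivial)
    (hσ : ∀ i, IsSectionOver s J (σ i)) (ha : a ∈ J \ PC s) (hb : b ∈ J \ PC s)
    {C : Set (Ihat s)} (hC : IsClosed C) (hCσ : ∀ z ∈ C, ∃ i, σ i b = z) :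
    ⋂ n, cylUnion σ {i | σ i b ∈ C} n a ⊆ ⋃ i, σ i '' J := by
  intro z hz
  choose k hkC hk using fun n => mem_iInter.1 hz n
  have hstable : ∀ m n, m ≤ n → (σ (k n) b).1 m = (σ (k m) b).1 m := fun m n hmn =>
    IsSectionOver.coord_eqOn hs hJ hJnt (hσ _) (hσ _) ha
      ((coord_eq_of_coord_eq (hk n) hmn).symm.trans (hk m)) hb.1
  obtain ⟨w, hw, hlim⟩ := exists_tendsto_of_coord_eq (fun n => σ (k n) b) hstable
  obtain ⟨i, rfl⟩ := hCσ w (hC.mem_of_tendsto hlim (Eventually.of_forall hkC))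
  have hzi : σ i a = z := Subtype.ext <| funext fun m =>
    (IsSectionOver.coord_eqOn hs hJ hJnt (hσ i) (hσ (k m)) hb (hw m) ha.1).trans (hk m).symm
  exact mem_iUnion.2 ⟨i, hzi ▸ mem_image_of_mem _ ha.1⟩

lemma measure_le_of_isClosed (hs : 1 < s) (hα : HasCylinderMasses s φ α)
    (hφ : BoundedVariationOn φ I) (hJI : J ⊆ I) (hJ : J.OrdConnected) (hJnt : J.Nontrivial)
    (hσ : ∀ i, IsSectionOver s J (σ i)) (ha : a ∈ J \ PC s) (hb : b ∈ J \ PC s)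
    {C : Set (Ihat s)} (hC : IsClosed C) (hCB : C ⊆ (⋃ i, σ i '' J) ∩ {z | z.1 0 = b}) :
    α b C ≤ α a (⋃ i, σ i '' J) := by
  have hs₀ : 0 < s := by linarith
  have hCσ : ∀ z ∈ C, ∃ i, σ i b = z := fun z hz => by
    obtain ⟨hzB, hz0⟩ := hCB hz
    obtain ⟨i, hi⟩ := mem_iUnion.1 hzB
    exact ⟨i, (show z.1 0 = b from hz0) ▸ (hσ i).eq_of_mem_image hi⟩
  set S := {i | σ i b ∈ C}
  have hCW : ∀ n, C ⊆ cylUnion σ S n b := fun n z hz => by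
    obtain ⟨i, rfl⟩ := hCσ z hz
    exact ⟨i, hz, rfl⟩
  have hfin : α a (cylUnion σ S 0 a) ≠ ∞ :=
    ne_top_of_le_ne_top (hα.measure_fiber ⟨hJI ha.1, ha.2⟩ ▸ ofReal_ne_top)
      (measure_mono (cylUnion_subset_fiber hσ S 0 ha.1))
  have hgeom : Tendsto (fun n => eVariationOn φ I * ENNReal.ofReal s⁻¹ ^ n) atTop (𝓝 0) := by
    simpa using ENNReal.Tendsto.const_mul (ENNReal.tendsto_pow_atTop_nhds_zero_of_lt_one
      (ENNReal.ofReal_lt_one.2 (inv_lt_one_of_one_lt₀ hs))) (Or.inr hφ)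
  have hlim := (tendsto_measure_iInter_atTop (fun n =>
    (measurableSet_cylUnion hs₀.ne' hσ S n ha.1).nullMeasurableSet) (antitone_cylUnion S a)
      ⟨0, hfin⟩).add hgeom
  rw [add_zero] at hlim
  refine le_trans ?_ (measure_mono (iInter_cylUnion_subset hs₀ hJ hJnt hσ ha hb hC hCσ))
  exact ge_of_tendsto hlim (Eventually.of_forall fun n => (measure_mono (hCW n)).trans
    (measure_cylUnion_le hs₀ hα hJI hJ hJnt hσ ha hb S n))

lemma measure_iUnion_image_le (hs : 1 < s) (hα : HasCylinderMasses s φ α)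
    (hφ : BoundedVariationOn φ I) (hJI : J ⊆ I) (hJ : J.OrdConnected) (hJnt : J.Nontrivial)
    (hσ : ∀ i, IsSectionOver s J (σ i)) (ha : a ∈ J \ PC s) (hb : b ∈ J \ PC s)
    (hsupp : α b {z | z.1 0 ≠ b} = 0)
    (hmeas : MeasurableSet ((⋃ i, σ i '' J) ∩ {z | z.1 0 = b})) :
    α b (⋃ i, σ i '' J) ≤ α a (⋃ i, σ i '' J) := by
  have := hα.isFiniteMeasure ⟨hJI hb.1, hb.2⟩ hsupp
  rw [← measure_inter_fiber hsupp, hmeas.measure_eq_iSup_isClosed_of_ne_top (measure_ne_top _ _)]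
  exact iSup₂_le fun C hCB => iSup_le fun hC =>
    measure_le_of_isClosed hs hα hφ hJI hJ hJnt hσ ha hb hC hCB

end Holonomy

theorem holonomy_invariance_general (s : ℝ) (hs₁ : Real.sqrt 2 < s)
    (φ : ℝ → ℝ)
    (hφbv : BoundedVariationOn φ I)
    (α : ℝ → Measure (Ihat s))
    (hαsupp : ∀ x ∈ I \ PC s, α x {z : Ihat s | z.1 0 ≠ x} = 0)
    (hαcyl : ∀ x ∈ I \ PC s, ∀ (y : ℕ → ℝ) (n : ℕ), y 0 = x →
      (∀ i ≤ n, y i ∈ I) → (∀ i < n, f s (y (i + 1)) = y i) →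
      α x (pointCyl s y n) = ENNReal.ofReal (φ (y n) / s ^ n))
    (J : Set ℝ) (hJI : J ⊆ I) (hJoc : J.OrdConnected) (hJnt : J.Nontrivial)
    (B : Set (Ihat s)) (hB : ZeroBoxOver s B J)
    (hBfib : ∀ x ∈ J \ PC s, MeasurableSet (B ∩ {z : Ihat s | z.1 0 = x}))
    (a b : ℝ) (ha : a ∈ J \ PC s) (hb : b ∈ J \ PC s) :
    α a B = α b B := by
  have hs : 1 < s := Real.one_lt_sqrt_two.trans hs₁
  obtain ⟨A, hA, rfl⟩ := hB
  choose σ hσ hγ using fun γ : A => (hA γ γ.2).exists_section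
  have hB : ⋃₀ A = ⋃ γ : A, σ γ '' J := by
    rw [sUnion_eq_iUnion]
    exact iUnion_congr hγ
  rw [hB] at hBfib ⊢
  have key : ∀ x ∈ J \ PC s, ∀ y ∈ J \ PC s,
      α y (⋃ γ : A, σ γ '' J) ≤ α x (⋃ γ : A, σ γ '' J) := fun x hx y hy =>
    measure_iUnion_image_le hs hαcyl hφbv hJI hJoc hJnt hσ hx hy
      (hαsupp y ⟨hJI hy.1, hy.2⟩) (hBfib y hy)
  exact le_antisymm (key b hb a ha) (key a ha b hb)

/-- holonomy invariance of `α` in `0`-boxes: if `B` is a `0`-box over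
`J` (with Borel fibers), then `α_a(B) = α_b(B)` for all `a, b ∈ J ∖ PC`. -/
theorem holonomy_invariance (s : ℝ) (hs₁ : Real.sqrt 2 < s) (hs₂ : s < 2)
    (φ : ℝ → ℝ)
    (hφpos : ∀ x ∈ I \ PC s, 0 < φ x)
    (hφbv : BoundedVariationOn φ I)
    (hφeq : ∀ x ∈ I \ PC s, ∀ n : ℕ,
      φ x = ∑' y : {y : ℝ // y ∈ I ∧ (f s)^[n] y = x}, φ y.1 / s ^ n)
    (μ : Measure ℝ) (hμprob : IsProbabilityMeasure μ) (hμerg : Ergodic (f s) μ)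
    (hμdens : μ = (volume.restrict I).withDensity fun x => ENNReal.ofReal (φ x))
    (α : ℝ → Measure (Ihat s))
    (hαsupp : ∀ x ∈ I \ PC s, α x {z : Ihat s | z.1 0 ≠ x} = 0)
    (hαcyl : ∀ x ∈ I \ PC s, ∀ (y : ℕ → ℝ) (n : ℕ), y 0 = x →
      (∀ i ≤ n, y i ∈ I) → (∀ i < n, f s (y (i + 1)) = y i) →
      α x (pointCyl s y n) = ENNReal.ofReal (φ (y n) / s ^ n))
    (J : Set ℝ) (hJI : J ⊆ I) (hJoc : J.OrdConnected) (hJnt : J.Nontrivial)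
    (B : Set (Ihat s)) (hB : ZeroBoxOver s B J)
    (hBfib : ∀ x ∈ J \ PC s, MeasurableSet (B ∩ {z : Ihat s | z.1 0 = x}))
    (a b : ℝ) (ha : a ∈ J \ PC s) (hb : b ∈ J \ PC s) :
    α a B = α b B :=
  holonomy_invariance_general s hs₁ φ hφbv α hαsupp hαcyl J hJI hJoc hJnt B hB hBfib a b ha hb

end Tent
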